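/- For every a ∈ ℝ² in the closed first quadrant (a₁ ≥ 0 and a₂ ≥ 0) and every integer k ≥ 3, N_k(Σ₃, a) ≤ 12k − 6, where Σ₃ = {A₂, A₃}. -/

import Mathlib

open Matrix Set

noncomputable section

/-- `XSeq S a k` is the set of all vectors `T_{k-1} ⋯ T_0 · a` with each `T_j ∈ S`
(and `XSeq S a 0 = {a}`). -/
def XSeq {n : ℕ} (S : Set (Matrix (Fin n) (Fin n) ℝ)) (a : Fin n → ℝ) : ℕ → Set (Fin n → ℝ)
  | 0 => {a}
  | k + 1 => ⋃ A ∈ S, A.mulVec '' XSeq S a k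

/-- `PHull S a k` is the convex hull of `XSeq S a k`. -/
def PHull {n : ℕ} (S : Set (Matrix (Fin n) (Fin n) ℝ)) (a : Fin n → ℝ) (k : ℕ) :
    Set (Fin n → ℝ) :=
  convexHull ℝ (XSeq S a k)

/-- `EPts S a k` is the set of extreme points of `PHull S a k`. -/
def EPts {n : ℕ} (S : Set (Matrix (Fin n) (Fin n) ℝ)) (a : Fin n → ℝ) (k : ℕ) :
    Set (Fin n → ℝ) :=
  Set.extremePoints ℝ (PHull S a k)

/-- `NExt S a k` is the number of extreme points of `PHull S a k`. -/
def NExt {n : ℕ} (S : Set (Matrix (Fin n) (Fin n) ℝ)) (a : Fin n → ℝ) (k : ℕ) : ℕ :=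
  (EPts S a k).ncard

def M1 : Matrix (Fin 2) (Fin 2) ℝ := !![0, 1; 1, 0]
def M2 : Matrix (Fin 2) (Fin 2) ℝ := !![1, 1; 0, 1]
def M3 : Matrix (Fin 2) (Fin 2) ℝ := !![1, 0; 1, 1]
def M4 : Matrix (Fin 2) (Fin 2) ℝ := !![1, 1; 1, 0]
def M5 : Matrix (Fin 2) (Fin 2) ℝ := !![0, 1; 1, 1]

/-!
Every point of `X_k(Σ₃, a)` is `w · a` for a word `w` of length `k` in `A₂, A₃`. For `x ≠ 0` in
the closed first quadrant and each four-letter pattern `b c c c̄`, the point `(b c c c̄) · x` is a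
convex combination of three other points of `X_4(Σ₃, x)`. Both generators are invertible and
preserve the quadrant, so no word containing such a pattern gives an extreme point. After its
first letter, a word avoiding the patterns alternates for a while and is then constant; it is
therefore determined by its first two letters and its number of letter changes, which leaves at
most `4k` words.
-/section Convexity

variable {E F : Type*} [AddCommGroup E] [Module ℝ E] [AddCommGroup F] [Module ℝ F]

theorem notMem_extremePoints_convexHull_of_mem_convexHull_sdiff {s : Set E} {z : E}
    (hz : z ∈ convexHull ℝ (s \ {z})) : z ∉ (convexHull ℝ s).extremePoints ℝ := by
  rw [(convex_convexHull ℝ s).mem_extremePoints_iff_mem_sdiff_convexHull_sdiff]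
  exact fun h ↦ h.2 (convexHull_mono (sdiff_subset_sdiff_left (subset_convexHull ℝ s)) hz)

theorem LinearMap.map_mem_convexHull_image_sdiff (f : E →ₗ[ℝ] F) (hf : Function.Injective f)
    {s : Set E} {z : E} (hz : z ∈ convexHull ℝ (s \ {z})) :
    f z ∈ convexHull ℝ (f '' s \ {f z}) := by
  rw [← image_singleton, ← image_sdiff hf, ← f.image_convexHull]
  exact mem_image_of_mem f hz

theorem mem_convexHull_range_of_sum_smul_eq {ι : Type*} [Fintype ι] {w : ι → ℝ} {y : ι → E}
    {z : E} (hw₀ : ∀ i, 0 ≤ w i) (hw : 0 < ∑ i, w i) (hz : (∑ i, w i) • z = ∑ i, w i • y i) :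
    z ∈ convexHull ℝ (range y) := by
  have hmem := Finset.univ.centerMass_mem_convexHull (fun i _ ↦ hw₀ i) hw
    (fun i _ ↦ mem_range_self (f := y) i)
  rwa [Finset.centerMass, ← hz, smul_smul, inv_mul_cancel₀ hw.ne', one_smul] at hmem

end Convexity

section Orbits

variable {n : ℕ} {S : Set (Matrix (Fin n) (Fin n) ℝ)}

theorem XSeq_subset_of_mem {a y : Fin n → ℝ} {m : ℕ} (hy : y ∈ XSeq S a m) :
    ∀ l, XSeq S y l ⊆ XSeq S a (m + l)
  | 0 => singleton_subset_iff.2 hy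
  | l + 1 => iUnion₂_mono fun _ _ ↦ image_mono (XSeq_subset_of_mem hy l)

theorem XSeq_zero_subset (k : ℕ) : XSeq S 0 k ⊆ {0} := by
  induction k with
  | zero => rfl
  | succ k ih =>
    refine iUnion₂_subset fun A _ ↦ ?_
    rintro _ ⟨y, hy, rfl⟩
    rw [ih hy, mulVec_zero]
    rfl

theorem mulVec_mem_convexHull_XSeq_succ_sdiff {A : Matrix (Fin n) (Fin n) ℝ} (hA : A ∈ S)
    (hAu : IsUnit A) {a z : Fin n → ℝ} {m : ℕ} (hz : z ∈ convexHull ℝ (XSeq S a m \ {z})) :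
    A *ᵥ z ∈ convexHull ℝ (XSeq S a (m + 1) \ {A *ᵥ z}) := by
  have himage : A.mulVecLin '' XSeq S a m ⊆ XSeq S a (m + 1) :=
    subset_biUnion_of_mem (u := fun B ↦ B.mulVec '' XSeq S a m) hA
  exact convexHull_mono (sdiff_subset_sdiff_left himage)
    (A.mulVecLin.map_mem_convexHull_image_sdiff (mulVec_injective_iff_isUnit.2 hAu) hz)

end Orbits

def genMat (b : Bool) : Matrix (Fin 2) (Fin 2) ℝ := if b then M2 else M3

/-- The head of the word acts first: `wordAct [b₀, …, b_{k-1}] x = T_{k-1} ⋯ T_0 x` with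
`T_j = genMat b_j`. -/
def wordAct (w : List Bool) (x : Fin 2 → ℝ) : Fin 2 → ℝ := w.foldl (fun y b ↦ genMat b *ᵥ y) x

theorem genMat_true : genMat true = M2 := rfl

theorem genMat_false : genMat false = M3 := rfl

theorem genMat_mem (b : Bool) : genMat b ∈ ({M2, M3} : Set (Matrix (Fin 2) (Fin 2) ℝ)) := by
  cases b <;> simp [genMat]

theorem isUnit_genMat (b : Bool) : IsUnit (genMat b) := by
  rw [isUnit_iff_isUnit_det]
  cases b <;> simp [genMat, M2, M3, det_fin_two_of]

theorem M2_mulVec (x : Fin 2 → ℝ) : M2 *ᵥ x = ![x 0 + x 1, x 1] := by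
  ext i; fin_cases i <;> simp [M2, mulVec, dotProduct, Fin.sum_univ_two]

theorem M3_mulVec (x : Fin 2 → ℝ) : M3 *ᵥ x = ![x 0, x 0 + x 1] := by
  ext i; fin_cases i <;> simp [M3, mulVec, dotProduct, Fin.sum_univ_two]

theorem le_genMat_mulVec {x : Fin 2 → ℝ} (hx : 0 ≤ x) (b : Bool) : x ≤ genMat b *ᵥ x := by
  have h0 : 0 ≤ x 0 := hx 0
  have h1 : 0 ≤ x 1 := hx 1
  intro i
  fin_cases i <;> cases b <;> simp only [genMat_true, genMat_false, M2_mulVec, M3_mulVec] <;>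
    simp <;> linarith

theorem wordAct_pos {x : Fin 2 → ℝ} (hx : 0 < x) (w : List Bool) : 0 < wordAct w x := by
  induction w generalizing x with
  | nil => exact hx
  | cons b w ih => exact ih (hx.trans_le (le_genMat_mulVec hx.le b))

theorem wordAct_append (u v : List Bool) (x : Fin 2 → ℝ) :
    wordAct (u ++ v) x = wordAct v (wordAct u x) :=
  List.foldl_append

theorem XSeq_eq_image_wordAct (a : Fin 2 → ℝ) :
    ∀ k, XSeq {M2, M3} a k = (wordAct · a) '' {w | w.length = k}
  | 0 => by simp [XSeq, wordAct]
  | k + 1 => by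
    ext x
    simp only [XSeq, XSeq_eq_image_wordAct a k, mem_iUnion, mem_image, mem_ofPred_eq,
      exists_prop, mem_insert_iff, mem_singleton_iff]
    constructor
    · rintro ⟨A, hA, _, ⟨w, rfl, rfl⟩, rfl⟩
      obtain ⟨b, rfl⟩ : ∃ b, A = genMat b := by
        rcases hA with rfl | rfl
        exacts [⟨true, rfl⟩, ⟨false, rfl⟩]
      exact ⟨w ++ [b], by simp, wordAct_append _ _ _⟩
    · rintro ⟨w, hw, rfl⟩
      obtain ⟨u, b, rfl⟩ := (w.eq_nil_or_concat').resolve_left (by rintro rfl; simp at hw)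
      refine ⟨genMat b, ?_, wordAct u a, ⟨u, by simpa using hw, rfl⟩, ?_⟩
      · exact genMat_mem b
      · rw [wordAct_append]; rfl

theorem wordAct_mem_XSeq (w : List Bool) (x : Fin 2 → ℝ) :
    wordAct w x ∈ XSeq {M2, M3} x w.length := by
  rw [XSeq_eq_image_wordAct]
  exact mem_image_of_mem _ rfl

theorem wordAct_mem_convexHull_XSeq_sdiff {a z : Fin 2 → ℝ} {m : ℕ}
    (hz : z ∈ convexHull ℝ (XSeq {M2, M3} a m \ {z})) (v : List Bool) :
    wordAct v z ∈ convexHull ℝ (XSeq {M2, M3} a (m + v.length) \ {wordAct v z}) := by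
  induction v generalizing z m with
  | nil => exact hz
  | cons b v ih =>
    rw [List.length_cons, add_comm v.length, ← add_assoc]
    exact ih (mulVec_mem_convexHull_XSeq_succ_sdiff (genMat_mem b) (isUnit_genMat b) hz)

theorem wordAct_mem_convexHull_of_certificate {ι : Type*} [Fintype ι] {x : Fin 2 → ℝ}
    {P : List Bool} {m : ℕ} (G : ι → List Bool) (w : ι → ℝ) (hG : ∀ i, (G i).length = m)
    (hw₀ : ∀ i, 0 ≤ w i) (hw : 0 < ∑ i, w i)
    (hP : (∑ i, w i) • wordAct P x = ∑ i, w i • wordAct (G i) x)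
    (hne : ∀ i, wordAct (G i) x ≠ wordAct P x) :
    wordAct P x ∈ convexHull ℝ (XSeq {M2, M3} x m \ {wordAct P x}) := by
  refine convexHull_mono ?_ (mem_convexHull_range_of_sum_smul_eq hw₀ hw hP)
  rintro _ ⟨i, rfl⟩
  exact ⟨hG i ▸ wordAct_mem_XSeq (G i) x, hne i⟩

theorem wordAct_nil (x : Fin 2 → ℝ) : wordAct [] x = x := rfl

theorem wordAct_true_cons (w : List Bool) (x : Fin 2 → ℝ) :
    wordAct (true :: w) x = wordAct w ![x 0 + x 1, x 1] :=
  congrArg (wordAct w) (M2_mulVec x)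

theorem wordAct_false_cons (w : List Bool) (x : Fin 2 → ℝ) :
    wordAct (false :: w) x = wordAct w ![x 0, x 0 + x 1] :=
  congrArg (wordAct w) (M3_mulVec x)

theorem wordAct_pattern_mem_convexHull {x : Fin 2 → ℝ} (hx : 0 < x) (b c : Bool) :
    wordAct [b, c, c, !c] x ∈ convexHull ℝ (XSeq {M2, M3} x 4 \ {wordAct [b, c, c, !c] x}) := by
  have hp : 0 ≤ x 0 := hx.le 0
  have hq : 0 ≤ x 1 := hx.le 1
  have hpq : 0 < x 0 + x 1 := by
    obtain ⟨-, i, hi⟩ := Pi.lt_def.1 hx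
    fin_cases i <;> simp at hi <;> linarith
  -- The weights are barycentric coordinates of the pattern point in the triangle of the other
  -- three, scaled to be polynomial in `x`.
  cases b <;> cases c <;> [
    refine wordAct_mem_convexHull_of_certificate
      ![[false, false, false, false], [false, false, true, false], [false, false, true, true]]
      ![x 1 ^ 2 + 3 * x 0 * x 1 + x 0 ^ 2, 2 * x 0 ^ 2, x 1 ^ 2 + 5 * x 0 * x 1 + 5 * x 0 ^ 2]
      ?_ ?_ ?_ ?_ ?_;
    refine wordAct_mem_convexHull_of_certificate
      ![[true, false, true, false], [false, true, false, true], [false, true, false, false]]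
      ![1, 2, 3] ?_ ?_ ?_ ?_ ?_;
    refine wordAct_mem_convexHull_of_certificate
      ![[true, true, false, true], [true, false, true, false], [false, true, false, true]]
      ![3, 1, 2] ?_ ?_ ?_ ?_ ?_;
    refine wordAct_mem_convexHull_of_certificate
      ![[true, true, true, true], [true, true, false, true], [true, true, false, false]]
      ![x 0 ^ 2 + 3 * x 0 * x 1 + x 1 ^ 2, 2 * x 1 ^ 2, x 0 ^ 2 + 5 * x 0 * x 1 + 5 * x 1 ^ 2]
      ?_ ?_ ?_ ?_ ?_]
  all_goals first
    | intro i; fin_cases i <;> rfl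
    | intro i; fin_cases i <;> simp <;> positivity
    | simp [Fin.sum_univ_three]; nlinarith
    | ext i
      fin_cases i <;>
        simp [Fin.sum_univ_three, wordAct_nil, wordAct_true_cons, wordAct_false_cons] <;> ring
    | intro i h
      have h0 := congrFun h 0
      have h1 := congrFun h 1
      fin_cases i <;> simp [wordAct_nil, wordAct_true_cons, wordAct_false_cons] at h0 h1 <;>
        linarith

def changes : List Bool → List Bool
  | a :: b :: t => (a != b) :: changes (b :: t)
  | _ => []

theorem length_changes : ∀ t : List Bool, (changes t).length = t.length - 1
  | [] | [_] => rfl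
  | _ :: b :: t => by simp [changes, length_changes (b :: t)]

theorem eq_of_headI_eq_of_changes_eq :
    ∀ {t s : List Bool}, t.length = s.length → t.headI = s.headI → changes t = changes s → t = s
  | [], [], _, _, _ | [_], [_], _, h, _ => by simp_all
  | a :: b :: t, a' :: b' :: s, hlen, hhead, hch => by
    simp only [List.headI_cons] at hhead
    subst hhead
    simp only [changes, List.cons.injEq] at hch
    have hb : b = b' := by cases a <;> cases b <;> cases b' <;> simp_all
    subst hb
    rw [eq_of_headI_eq_of_changes_eq (t := b :: t) (s := b :: s) (by simpa using hlen) rfl hch.2]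
  | [], _ :: _, h, _, _ | _ :: _, [], h, _, _ | [_], _ :: _ :: _, h, _, _
  | _ :: _ :: _, [_], h, _, _ => by simp at h

theorem isChain_changes_of_forall_not_infix :
    ∀ {t : List Bool}, (∀ c, ¬ [c, c, !c] <:+: t) → (changes t).IsChain (· ≥ ·)
  | [], _ | [_], _ | [_, _], _ => by simp [changes]
  | a :: b :: c :: t, h => by
    have hstep : (a != b) ≥ (b != c) := by
      by_contra hlt
      have hab : a = b := by cases a <;> cases b <;> cases c <;> simp_all
      have hbc : c = !b := by cases a <;> cases b <;> cases c <;> simp_all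
      exact h a ⟨[], t, by simp [hab, hbc]⟩
    have htail := isChain_changes_of_forall_not_infix (t := b :: c :: t)
      fun d hd ↦ h d (hd.trans (List.infix_cons (List.infix_refl _)))
    simp only [changes] at htail ⊢
    exact List.isChain_cons_cons.2 ⟨hstep, htail⟩

theorem eq_of_pairwise_ge_of_count_true_eq {l₁ l₂ : List Bool} (h₁ : l₁.Pairwise (· ≥ ·))
    (h₂ : l₂.Pairwise (· ≥ ·)) (hlen : l₁.length = l₂.length)
    (hcount : l₁.count true = l₂.count true) : l₁ = l₂ := by
  refine List.Perm.eq_of_pairwise' h₁ h₂ (List.perm_iff_count.2 fun b ↦ ?_)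
  have e₁ := List.count_true_add_count_false l₁
  have e₂ := List.count_true_add_count_false l₂
  cases b <;> omega

theorem ncard_length_eq_forall_not_infix_le (n : ℕ) :
    {t : List Bool | t.length = n ∧ ∀ c, ¬ [c, c, !c] <:+: t}.ncard ≤ 2 * (n + 1) := by
  calc _ ≤ (Finset.univ ×ˢ Finset.range (n + 1) : Finset (Bool × ℕ)).card := by
        rw [← ncard_coe_finset]
        refine ncard_le_ncard_of_injOn (fun t ↦ (t.headI, (changes t).count true)) ?_ ?_
        · rintro t ⟨rfl, -⟩
          simp only [Finset.coe_product, Finset.coe_univ, Finset.coe_range, mem_prod, mem_univ,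
            mem_Iio, true_and]
          have := length_changes t
          have := (changes t).count_le_length (a := true)
          omega
        · rintro t ⟨hlen, ht⟩ s ⟨rfl, hs⟩ hts
          simp only [Prod.mk.injEq] at hts
          exact eq_of_headI_eq_of_changes_eq hlen hts.1 (eq_of_pairwise_ge_of_count_true_eq
            (List.isChain_iff_pairwise.1 (isChain_changes_of_forall_not_infix ht))
            (List.isChain_iff_pairwise.1 (isChain_changes_of_forall_not_infix hs))
            (by simp [length_changes, hlen]) hts.2)
    _ = 2 * (n + 1) := by simp

theorem List.exists_cons_infix_cons {α : Type*} {l t : List α} (h : l <:+: t) (f : α) :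
    ∃ x, x :: l <:+: f :: t := by
  obtain ⟨s, r, rfl⟩ := h
  rcases (f :: s).eq_nil_or_concat' with hs | ⟨s', x, hs⟩
  · simp at hs
  · refine ⟨x, s', r, ?_⟩
    rw [← List.cons_append, ← List.cons_append, hs]
    simp

theorem ncard_length_eq_succ_forall_not_infix_le (n : ℕ) :
    {w : List Bool | w.length = n + 1 ∧ ∀ b c, ¬ [b, c, c, !c] <:+: w}.ncard ≤ 4 * (n + 1) := by
  let T := {t : List Bool | t.length = n ∧ ∀ c, ¬ [c, c, !c] <:+: t}
  have hT : T.Finite := (List.finite_length_eq Bool n).subset fun _ ht ↦ ht.1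
  calc _ ≤ ((fun p : Bool × List Bool ↦ p.1 :: p.2) '' (univ ×ˢ T)).ncard := by
        refine ncard_le_ncard ?_ ((finite_univ.prod hT).image _)
        rintro (_ | ⟨f, t⟩) ⟨hlen, hw⟩
        · simp at hlen
        refine ⟨(f, t), ⟨mem_univ f, by simpa using hlen, fun c hc ↦ ?_⟩, rfl⟩
        obtain ⟨x, hx⟩ := List.exists_cons_infix_cons hc f
        exact hw x c hx
    _ ≤ (univ ×ˢ T).ncard := ncard_image_le (finite_univ.prod hT)
    _ ≤ 4 * (n + 1) := by
        rw [ncard_prod, ncard_univ, Nat.card_eq_fintype_card, Fintype.card_bool]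
        have hTcard : T.ncard ≤ 2 * (n + 1) := ncard_length_eq_forall_not_infix_le n
        omega

theorem wordAct_notMem_EPts_of_infix {a : Fin 2 → ℝ} (ha : 0 < a) {w : List Bool} {b c : Bool}
    (h : [b, c, c, !c] <:+: w) : wordAct w a ∉ EPts {M2, M3} a w.length := by
  obtain ⟨u, v, rfl⟩ := h
  have hsub : XSeq {M2, M3} (wordAct u a) 4 ⊆ XSeq {M2, M3} a (u.length + 4) :=
    XSeq_subset_of_mem (wordAct_mem_XSeq u a) 4
  have hmem := wordAct_mem_convexHull_XSeq_sdiff (convexHull_mono (sdiff_subset_sdiff_left hsub)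
    (wordAct_pattern_mem_convexHull (wordAct_pos ha u) b c)) v
  rw [← wordAct_append, ← wordAct_append, ← List.append_assoc] at hmem
  have hlen : (u ++ [b, c, c, !c] ++ v).length = u.length + 4 + v.length := by simp; omega
  rw [hlen]
  exact notMem_extremePoints_convexHull_of_mem_convexHull_sdiff hmem

theorem EPts_subset_image_wordAct {a : Fin 2 → ℝ} (ha : 0 < a) (k : ℕ) :
    EPts {M2, M3} a k ⊆
      (wordAct · a) '' {w | w.length = k ∧ ∀ b c, ¬ [b, c, c, !c] <:+: w} := by
  intro x hx
  obtain ⟨w, rfl, rfl⟩ := XSeq_eq_image_wordAct a k ▸ extremePoints_convexHull_subset hx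
  exact ⟨w, ⟨rfl, fun b c h ↦ wordAct_notMem_EPts_of_infix ha h hx⟩, rfl⟩

/-- `N_k(Σ₃, a) ≤ 12k - 6` for `a` in the closed first quadrant and `k ≥ 3`,
where `Σ₃ = {A₂, A₃}`. -/
theorem stmt16 (a : Fin 2 → ℝ) (ha : 0 ≤ a 0 ∧ 0 ≤ a 1) (k : ℕ) (hk : 3 ≤ k) :
    NExt {M2, M3} a k ≤ 12 * k - 6 := by
  have ha' : 0 ≤ a := fun i ↦ by fin_cases i; exacts [ha.1, ha.2]
  obtain ⟨n, rfl⟩ : ∃ n, k = n + 1 := ⟨k - 1, by omega⟩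
  rcases ha'.eq_or_lt with rfl | hpos
  · have h : NExt {M2, M3} 0 (n + 1) ≤ 1 :=
      (ncard_le_ncard (extremePoints_convexHull_subset.trans (XSeq_zero_subset _))).trans
        (ncard_singleton _).le
    omega
  · have hfin : {w : List Bool | w.length = n + 1 ∧ ∀ b c, ¬ [b, c, c, !c] <:+: w}.Finite :=
      (List.finite_length_eq Bool (n + 1)).subset fun _ hw ↦ hw.1
    have h := calc NExt {M2, M3} a (n + 1)
        _ ≤ _ := ncard_le_ncard (EPts_subset_image_wordAct hpos (n + 1)) (hfin.image _)
        _ ≤ _ := ncard_image_le hfin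
        _ ≤ 4 * (n + 1) := ncard_length_eq_succ_forall_not_infix_le n
    omega

end
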